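/- If A is an arrival process with arrival curve α (i.e., A(t) − A(τ) ≤ α(t−τ) for all t ≥ τ ≥ 0) and the system offers service curve β (i.e., D ≥ A ⊗ β pointwise), then at every time t the backlog q(t) = A(t) − D(t) satisfies q(t) ≤ sup_{τ ≥ 0} (α(τ) − β(τ)). -/

import Mathlib

theorem backlog_bound_general
    (A D α β : ℝ → ℝ)
    (harr : ∀ τ t : ℝ, 0 ≤ τ → τ ≤ t → A t - A τ ≤ α (t - τ))
    (hserv : ∀ t, 0 ≤ t →
      sInf {x : ℝ | ∃ τ : ℝ, 0 ≤ τ ∧ τ ≤ t ∧ x = A τ + β (t - τ)} ≤ D t) :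
    ∀ t, 0 ≤ t → ∀ q : ℝ, (∀ τ, 0 ≤ τ → α τ - β τ ≤ q) → A t - D t ≤ q := by
  intro t ht q hq
  have hlower : ∀ τ, 0 ≤ τ → τ ≤ t → A t - q ≤ A τ + β (t - τ) := by
    intro τ hτ0 hτt
    linarith [harr τ t hτ0 hτt, hq (t - τ) (sub_nonneg.mpr hτt)]
  have hinf : A t - q ≤ sInf {x : ℝ | ∃ τ : ℝ, 0 ≤ τ ∧ τ ≤ t ∧ x = A τ + β (t - τ)} := by
    refine le_csInf ⟨_, 0, le_rfl, ht, rfl⟩ ?_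
    rintro x ⟨τ, hτ0, hτt, rfl⟩
    exact hlower τ hτ0 hτt
  linarith [hserv t ht]

/-- Backlog bound: if `A` has arrival curve `α` and the system offers service
curve `β`, then at every time `t` the backlog `A t - D t` is bounded by every
upper bound of `{α τ - β τ : τ ≥ 0}` (i.e. by `sup_{τ ≥ 0} (α τ - β τ)`). -/
theorem backlog_bound
    (A D α β : ℝ → ℝ)
    (hA0 : A 0 = 0) (hD0 : D 0 = 0)
    (hAmono : MonotoneOn A (Set.Ici 0)) (hDmono : MonotoneOn D (Set.Ici 0))
    (hDA : ∀ t, 0 ≤ t → D t ≤ A t)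
    (hβpos : ∀ t, 0 ≤ t → 0 ≤ β t)
    (harr : ∀ τ t : ℝ, 0 ≤ τ → τ ≤ t → A t - A τ ≤ α (t - τ))
    (hserv : ∀ t, 0 ≤ t →
      sInf {x : ℝ | ∃ τ : ℝ, 0 ≤ τ ∧ τ ≤ t ∧ x = A τ + β (t - τ)} ≤ D t) :
    ∀ t, 0 ≤ t → ∀ q : ℝ, (∀ τ, 0 ≤ τ → α τ - β τ ≤ q) → A t - D t ≤ q :=
  backlog_bound_general A D α β harr hserv
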